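/- arXiv:1404.3057 — 5 statements merged into one kernel-verified Lean document; each statement's English description precedes it below -/
import Mathlib

section
/- Let A = K[f_1,…,f_m] be a graded integral domain with homogeneous generators of positive degree over a field K of characteristic 0. The A-submodule N of Ω(Q(A)/K) generated by all brackets {f,g} of homogeneous elements f,g of positive degree equals the A-submodule generated by the finitely many brackets {f_i, f_j}, 1 ≤ i < j ≤ m. -/
/-!
The bracket `{a, b} = q • b • da - p • a • db` of `a ∈ A_p`, `b ∈ A_q` is biadditive, antisymmetric,
vanishes on constants and satisfies the Leibniz rule `{a a', b} = a • {a', b} + a' • {a, b}`, the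
degrees adding. So, for fixed homogeneous `b`, the elements `x` all of whose homogeneous components
`x_p` have `{x_p, b}` in the span `N` of the brackets of generators form a `K`-subalgebra, which is
all of `A` once it contains the generators. Applied first to the second argument with a generator
fixed, then to the first argument, this puts every bracket of homogeneous elements into `N`.
-/

open DirectSum Finset

namespace Derivation

variable {R S M : Type*} [CommRing R] [CommRing S] [Algebra R S] [AddCommGroup M] [Module S M]
  [Module R M] (D : Derivation R S M)

noncomputable def gradedBracket (a b : S) (p q : ℕ) : M :=
  (q : S) • (b • D a) - (p : S) • (a • D b)

theorem gradedBracket_swap (a b : S) (p q : ℕ) :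
    D.gradedBracket b a q p = -D.gradedBracket a b p q := by
  simp [gradedBracket]

theorem gradedBracket_self (a : S) (p : ℕ) : D.gradedBracket a a p p = 0 :=
  sub_self _

theorem gradedBracket_add_left (a a' b : S) (p q : ℕ) :
    D.gradedBracket (a + a') b p q = D.gradedBracket a b p q + D.gradedBracket a' b p q := by
  simp only [gradedBracket, map_add]
  module

theorem gradedBracket_add_right (a b b' : S) (p q : ℕ) :
    D.gradedBracket a (b + b') p q = D.gradedBracket a b p q + D.gradedBracket a b' p q := by
  simp only [gradedBracket, map_add]
  module

theorem gradedBracket_mul_left (a a' b : S) (p p' q : ℕ) :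
    D.gradedBracket (a * a') b (p + p') q =
      a • D.gradedBracket a' b p' q + a' • D.gradedBracket a b p q := by
  simp only [gradedBracket, leibniz, Nat.cast_add]
  module

theorem gradedBracket_mul_right (a b b' : S) (p q q' : ℕ) :
    D.gradedBracket a (b * b') p (q + q') =
      b • D.gradedBracket a b' p q' + b' • D.gradedBracket a b p q := by
  simp only [gradedBracket, leibniz, Nat.cast_add]
  module

theorem gradedBracket_algebraMap_right [IsScalarTower R S M] (a : S) (r : R) (p : ℕ) :
    D.gradedBracket a (algebraMap R S r) p 0 = 0 := by
  simp [gradedBracket]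

theorem gradedBracket_algebraMap_left [IsScalarTower R S M] (b : S) (r : R) (q : ℕ) :
    D.gradedBracket (algebraMap R S r) b 0 q = 0 := by
  rw [← neg_eq_zero, ← gradedBracket_swap, gradedBracket_algebraMap_right]

end Derivation

namespace GradedAlgebra

variable {ι R A M : Type*} [DecidableEq ι] [AddMonoid ι] [HasAntidiagonal ι] [CommSemiring R]
  [Semiring A] [Algebra R A] (𝒜 : ι → Submodule R A) [GradedAlgebra 𝒜] [AddCommGroup M]
  [Module A M]

theorem leibniz_apply_mem_of_mem_graded {φ : ι → A → M} {N : Submodule A M} {s : Set A}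
    (hs : Algebra.adjoin R s = ⊤) (hadd : ∀ p x y, φ p (x + y) = φ p x + φ p y)
    (hmul : ∀ p q x y, φ (p + q) (x * y) = x • φ q y + y • φ p x)
    (halg : ∀ r, φ 0 (algebraMap R A r) ∈ N) (hgen : ∀ x ∈ s, ∃ p, x ∈ 𝒜 p ∧ φ p x ∈ N)
    {p : ι} {x : A} (hx : x ∈ 𝒜 p) : φ p x ∈ N := by
  have hzero (p : ι) : φ p 0 = 0 := by simpa using hadd p 0 0
  have homogeneous {n : ι} {y : A} (hy : y ∈ 𝒜 n) (hφ : φ n y ∈ N) (p : ι) :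
      φ p (decompose 𝒜 y p) ∈ N := by
    by_cases h : n = p
    · subst h; rwa [decompose_of_mem_same 𝒜 hy]
    · rw [decompose_of_mem_ne 𝒜 hy h, hzero]; exact N.zero_mem
  suffices ∀ y, ∀ p, φ p (decompose 𝒜 y p) ∈ N by
    simpa [decompose_of_mem_same 𝒜 hx] using this x p
  intro y
  induction (hs ▸ Algebra.mem_top : y ∈ Algebra.adjoin R s) using Algebra.adjoin_induction with
  | mem y hy =>
    obtain ⟨n, hyn, hφ⟩ := hgen y hy
    exact homogeneous hyn hφ
  | algebraMap r => exact homogeneous (SetLike.algebraMap_mem_graded 𝒜 r) (halg r)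
  | add y z _ _ hy hz =>
    intro p
    rw [decompose_add, DirectSum.add_apply, Submodule.coe_add, hadd]
    exact N.add_mem (hy p) (hz p)
  | mul y z _ _ hy hz =>
    intro p
    rw [decompose_mul, coe_mul_apply_eq_sum_antidiagonal]
    change AddMonoidHom.mk' (φ p) (hadd p) _ ∈ N
    rw [map_sum]
    refine N.sum_mem fun uv huv => ?_
    rw [AddMonoidHom.mk'_apply, ← mem_antidiagonal.1 huv, hmul]
    exact N.add_mem (N.smul_mem _ (hz uv.2)) (N.smul_mem _ (hy uv.1))

end GradedAlgebra

section GradedBracket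

variable {R A S M : Type*} [CommRing R] [CommRing A] [Algebra R A] (𝒜 : ℕ → Submodule R A)
  [GradedAlgebra 𝒜] [CommRing S] [Algebra R S] [Algebra A S] [IsScalarTower R A S]
  [AddCommGroup M] [Module S M] [Module R M] [Module A M] [IsScalarTower A S M]
  (D : Derivation R S M)

theorem gradedBracket_mem_of_mem_graded [IsScalarTower R S M] {κ : Type*} {f : κ → A}
    {d : κ → ℕ} (hhom : ∀ i, f i ∈ 𝒜 (d i)) (hgen : Algebra.adjoin R (Set.range f) = ⊤)
    {N : Submodule A M}
    (hN : ∀ i j, D.gradedBracket (algebraMap A S (f i)) (algebraMap A S (f j)) (d i) (d j) ∈ N)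
    {a b : A} {p q : ℕ} (ha : a ∈ 𝒜 p) (hb : b ∈ 𝒜 q) :
    D.gradedBracket (algebraMap A S a) (algebraMap A S b) p q ∈ N := by
  have halg (r : R) : algebraMap A S (algebraMap R A r) = algebraMap R S r :=
    (IsScalarTower.algebraMap_apply R A S r).symm
  have generators_left (i : κ) {b : A} {q : ℕ} (hb : b ∈ 𝒜 q) :
      D.gradedBracket (algebraMap A S (f i)) (algebraMap A S b) (d i) q ∈ N := by
    refine GradedAlgebra.leibniz_apply_mem_of_mem_graded 𝒜
      (φ := fun q b => D.gradedBracket (algebraMap A S (f i)) (algebraMap A S b) (d i) q) hgen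
      (fun _ _ _ => by simp only [map_add, D.gradedBracket_add_right])
      (fun _ _ _ _ => by simp only [map_mul, D.gradedBracket_mul_right, algebraMap_smul])
      (fun r => by simp only [halg, D.gradedBracket_algebraMap_right, N.zero_mem]) ?_ hb
    rintro _ ⟨j, rfl⟩
    exact ⟨d j, hhom j, hN i j⟩
  refine GradedAlgebra.leibniz_apply_mem_of_mem_graded 𝒜
    (φ := fun p a => D.gradedBracket (algebraMap A S a) (algebraMap A S b) p q) hgen
    (fun _ _ _ => by simp only [map_add, D.gradedBracket_add_left])
    (fun _ _ _ _ => by simp only [map_mul, D.gradedBracket_mul_left, algebraMap_smul])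
    (fun r => by simp only [halg, D.gradedBracket_algebraMap_left, N.zero_mem]) ?_ ha
  rintro _ ⟨i, rfl⟩
  exact ⟨d i, hhom i, generators_left i hb⟩

end GradedBracket

theorem bracket_module_finitely_generated_general
    {K A : Type*} [Field K] [CommRing A] [Algebra K A]
    (𝒜 : ℕ → Submodule K A) [GradedAlgebra 𝒜]
    {m : ℕ} (f : Fin m → A) (d : Fin m → ℕ)
    (hd : ∀ i, 0 < d i) (hhom : ∀ i, f i ∈ 𝒜 (d i)) (hf0 : ∀ i, f i ≠ 0)
    (hgen : Algebra.adjoin K (Set.range f) = ⊤) :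
    letI Q := FractionRing A
    letI ι := algebraMap A (FractionRing A)
    letI D := KaehlerDifferential.D K (FractionRing A)
    letI : Module A (KaehlerDifferential K (FractionRing A)) :=
      Module.compHom _ (algebraMap A (FractionRing A))
    Submodule.span A {ω : KaehlerDifferential K (FractionRing A) |
        ∃ (a b : A) (p q : ℕ), 0 < p ∧ 0 < q ∧ a ∈ 𝒜 p ∧ b ∈ 𝒜 q ∧ a ≠ 0 ∧ b ≠ 0 ∧
          ω = (q : Q) • (ι b • D (ι a)) - (p : Q) • (ι a • D (ι b))} =
      Submodule.span A {ω : KaehlerDifferential K (FractionRing A) |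
        ∃ i j : Fin m, i < j ∧
          ω = (d j : Q) • (ι (f j) • D (ι (f i))) - (d i : Q) • (ι (f i) • D (ι (f j)))} := by
  -- `Ω` already carries an `A`-action through `A ⊗ A`, not definitionally the one through `ι`.
  let instModule : Module A (KaehlerDifferential K (FractionRing A)) :=
    Module.compHom _ (algebraMap A (FractionRing A))
  have : @IsScalarTower A (FractionRing A) (KaehlerDifferential K (FractionRing A))
      _ _ instModule.toSMul :=
    letI := instModule.toSMul
    .of_algebraMap_smul fun _ _ => rfl
  let D := KaehlerDifferential.D K (FractionRing A)
  refine le_antisymm (Submodule.span_le.2 ?_) (Submodule.span_le.2 ?_)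
  · rintro _ ⟨a, b, p, q, -, -, ha, hb, -, -, rfl⟩
    refine gradedBracket_mem_of_mem_graded 𝒜 D hhom hgen (fun i j => ?_) ha hb
    rcases lt_trichotomy i j with h | rfl | h
    · exact Submodule.subset_span ⟨i, j, h, rfl⟩
    · rw [D.gradedBracket_self]; exact Submodule.zero_mem _
    · rw [← neg_neg (D.gradedBracket _ _ _ _), ← D.gradedBracket_swap]
      exact Submodule.neg_mem _ (Submodule.subset_span ⟨j, i, h, rfl⟩)
  · rintro _ ⟨i, j, -, rfl⟩
    exact Submodule.subset_span
      ⟨f i, f j, d i, d j, hd i, hd j, hhom i, hhom j, hf0 i, hf0 j, rfl⟩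

/-- the A-module generated by all brackets {f,g} of homogeneous elements of
    positive degree equals the A-module generated by the brackets {f_i,f_j}, i < j. -/
theorem bracket_module_finitely_generated
    {K A : Type*} [Field K] [CharZero K] [CommRing A] [IsDomain A] [Algebra K A]
    (𝒜 : ℕ → Submodule K A) [GradedAlgebra 𝒜]
    {m : ℕ} (f : Fin m → A) (d : Fin m → ℕ)
    (hd : ∀ i, 0 < d i) (hhom : ∀ i, f i ∈ 𝒜 (d i)) (hf0 : ∀ i, f i ≠ 0)
    (hgen : Algebra.adjoin K (Set.range f) = ⊤) :
    letI Q := FractionRing A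
    letI ι := algebraMap A (FractionRing A)
    letI D := KaehlerDifferential.D K (FractionRing A)
    letI : Module A (KaehlerDifferential K (FractionRing A)) :=
      Module.compHom _ (algebraMap A (FractionRing A))
    Submodule.span A {ω : KaehlerDifferential K (FractionRing A) |
        ∃ (a b : A) (p q : ℕ), 0 < p ∧ 0 < q ∧ a ∈ 𝒜 p ∧ b ∈ 𝒜 q ∧ a ≠ 0 ∧ b ≠ 0 ∧
          ω = (q : Q) • (ι b • D (ι a)) - (p : Q) • (ι a • D (ι b))} =
      Submodule.span A {ω : KaehlerDifferential K (FractionRing A) |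
        ∃ i j : Fin m, i < j ∧
          ω = (d j : Q) • (ι (f j) • D (ι (f i))) - (d i : Q) • (ι (f i) • D (ι (f j)))} :=
  bracket_module_finitely_generated_general 𝒜 f d hd hhom hf0 hgen
end

section
/- Let N' be the A-module generated by symbols [f_i,f_j] subject to: (1) d_k f_k [f_i,f_j] = d_j f_j [f_i,f_k] + d_i f_i [f_k,f_j] and [f_i,f_j] + [f_j,f_i] = 0, and (2) Σ_ν (∂_ν R)(f)·[f_ν,f_μ] = 0 for every isobaric relation R among f_1,…,f_m and every μ. Then the assignment [f_i,f_j] ↦ {f_i,f_j} defines a well-defined surjective A-module homomorphism N' → N. -/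
/-!
The map sends the free generator `[f_i,f_j]` to `{f_i,f_j}`, so its image is the span of the
brackets by construction; the content is that every defining relation of `N'` is killed. The
first two families are identities in any module over `Q(A)`. For an isobaric relation `R(f) = 0`
of weight `k`, expanding the brackets gives
`d_μ f_μ • Σ_ν (∂_ν R)(f) df_ν - (Σ_ν d_ν f_ν (∂_ν R)(f)) • df_μ`:
the first sum is `d(R(f)) = 0` by the chain rule, the second is `k R(f) = 0` by Euler's identity.
-/

open MvPolynomial

theorem Derivation.map_mvPolynomial_aeval {K Q M ι : Type*} [CommRing K] [CommRing Q] [Algebra K Q]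
    [AddCommGroup M] [Module K M] [Module Q M] [IsScalarTower K Q M] [Fintype ι]
    (D : Derivation K Q M) (y : ι → Q) (R : MvPolynomial ι K) :
    D (aeval y R) = ∑ ν, aeval y (pderiv ν R) • D (y ν) := by
  classical
  induction R using MvPolynomial.induction_on with
  | C a => simp
  | add p q hp hq => simp [hp, hq, add_smul, Finset.sum_add_distrib]
  | mul_X p i hp =>
    simp [Derivation.leibniz, pderiv_X, Pi.single_apply, add_smul, mul_smul,
      Finset.sum_add_distrib, ← Finset.smul_sum, hp, apply_ite]

theorem MvPolynomial.isWeightedHomogeneous_of_forall_mem_support {K ι : Type*} [CommSemiring K]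
    [Fintype ι] {R : MvPolynomial ι K} {d : ι → ℕ} {k : ℕ}
    (h : ∀ v ∈ R.support, ∑ i, d i * v i = k) : R.IsWeightedHomogeneous d k := by
  intro v hv
  simpa [Finsupp.weight_apply, Finsupp.sum_fintype, mul_comm] using h v (mem_support_iff.2 hv)

section WeightedBracket

variable {Q M ι : Type*} [CommRing Q] [AddCommGroup M] [Module Q M]
  (d : ι → ℕ) (y : ι → Q) (ω : ι → M)

/-- With `y = f` and `ω = df` this is the paper's `{f_i,f_j} = d_j f_j df_i - d_i f_i df_j`. -/
def weightedBracket (i j : ι) : M := (d j : Q) • (y j • ω i) - (d i : Q) • (y i • ω j)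

theorem weightedBracket_add_swap (i j : ι) :
    weightedBracket d y ω i j + weightedBracket d y ω j i = 0 := by
  unfold weightedBracket; abel

theorem weightedBracket_three_term (i j k : ι) :
    (d k * y k) • weightedBracket d y ω i j - (d j * y j) • weightedBracket d y ω i k
      - (d i * y i) • weightedBracket d y ω k j = 0 := by
  unfold weightedBracket; module

theorem sum_smul_weightedBracket [Fintype ι] (a : ι → Q) (μ : ι) :
    ∑ ν, a ν • weightedBracket d y ω ν μ =
      (d μ * y μ) • ∑ ν, a ν • ω ν - (∑ ν, d ν * (y ν * a ν)) • ω μ := by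
  simp only [weightedBracket, Finset.smul_sum, Finset.sum_smul, ← Finset.sum_sub_distrib]
  refine Finset.sum_congr rfl fun ν _ => ?_
  module

end WeightedBracket

theorem sum_aeval_pderiv_smul_weightedBracket_eq_zero {K Q M ι : Type*} [CommRing K] [CommRing Q]
    [Algebra K Q] [AddCommGroup M] [Module K M] [Module Q M] [IsScalarTower K Q M] [Fintype ι]
    (D : Derivation K Q M) (d : ι → ℕ) (y : ι → Q) {R : MvPolynomial ι K} {k : ℕ}
    (hR : R.IsWeightedHomogeneous d k) (hR0 : aeval y R = 0) (μ : ι) :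
    ∑ ν, aeval y (pderiv ν R) • weightedBracket d y (fun i => D (y i)) ν μ = 0 := by
  have euler : ∑ ν, (d ν : Q) * (y ν * aeval y (pderiv ν R)) = 0 := by
    simpa [map_sum, hR0] using congrArg (aeval y) hR.sum_weight_X_mul_pderiv
  rw [sum_smul_weightedBracket, ← D.map_mvPolynomial_aeval, hR0, euler, D.map_zero, smul_zero,
    zero_smul, sub_zero]

def bracketRelations (K : Type*) {A ι : Type*} [CommSemiring K] [CommRing A] [Algebra K A]
    [Fintype ι] (f : ι → A) (d : ι → ℕ) : Set ((ι × ι) →₀ A) :=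
  {x | ∃ i j k : ι,
      x = Finsupp.single (i, j) ((d k : A) * f k)
        - Finsupp.single (i, k) ((d j : A) * f j)
        - Finsupp.single (k, j) ((d i : A) * f i)} ∪
    {x | ∃ i j : ι, x = Finsupp.single (i, j) (1 : A) + Finsupp.single (j, i) (1 : A)} ∪
    {x | ∃ (R : MvPolynomial ι K) (μ : ι) (k : ℕ),
      (∀ v ∈ R.support, ∑ i, d i * v i = k) ∧ aeval f R = 0 ∧
      x = ∑ ν, Finsupp.single (ν, μ) (aeval f (pderiv ν R))}

theorem span_bracketRelations_le_ker {K A Q M ι : Type*} [CommRing K] [CommRing A] [CommRing Q]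
    [Algebra K A] [Algebra A Q] [Algebra K Q] [IsScalarTower K A Q] [AddCommGroup M]
    [Module K M] [Module A M] [Module Q M] [IsScalarTower K Q M] [IsScalarTower A Q M] [Fintype ι]
    (D : Derivation K Q M) (f : ι → A) (d : ι → ℕ) :
    Submodule.span A (bracketRelations K f d) ≤ LinearMap.ker (Finsupp.linearCombination A
      fun p : ι × ι => weightedBracket d (fun i => algebraMap A Q (f i))
        (fun i => D (algebraMap A Q (f i))) p.1 p.2) := by
  set y : ι → Q := fun i => algebraMap A Q (f i)
  have hsmul (a : A) (x : M) : a • x = algebraMap A Q a • x := (algebraMap_smul Q a x).symm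
  rw [Submodule.span_le]
  rintro x ((⟨i, j, k, rfl⟩ | ⟨i, j, rfl⟩) | ⟨R, μ, k, hR, hR0, rfl⟩) <;>
    simp only [SetLike.mem_coe, LinearMap.mem_ker, map_sub, map_add, map_sum,
      Finsupp.linearCombination_single, hsmul]
  · simpa only [map_mul, map_natCast] using weightedBracket_three_term d y (fun i => D (y i)) i j k
  · simpa only [map_one, one_smul] using weightedBracket_add_swap d y (fun i => D (y i)) i j
  · have hι (P : MvPolynomial ι K) :
        algebraMap A Q (aeval f P) = aeval y P :=
      comp_aeval_apply f (IsScalarTower.toAlgHom K A Q) P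
    simp only [hι]
    exact sum_aeval_pderiv_smul_weightedBracket_eq_zero D d _
      (isWeightedHomogeneous_of_forall_mem_support hR) (by rw [← hι, hR0, map_zero]) μ

open MvPolynomial in
theorem presented_module_maps_onto_bracket_module_general
    {K A : Type*} [Field K] [CommRing A] [Algebra K A]
    {m : ℕ} (f : Fin m → A) (d : Fin m → ℕ) :
    letI Q := FractionRing A
    letI ι := algebraMap A (FractionRing A)
    letI D := KaehlerDifferential.D K (FractionRing A)
    letI : Module A (KaehlerDifferential K (FractionRing A)) :=
      Module.compHom _ (algebraMap A (FractionRing A))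
    ∀ Rel : Submodule A ((Fin m × Fin m) →₀ A),
      Rel = Submodule.span A
        ({x | ∃ i j k : Fin m,
            x = Finsupp.single (i, j) ((d k : A) * f k)
              - Finsupp.single (i, k) ((d j : A) * f j)
              - Finsupp.single (k, j) ((d i : A) * f i)} ∪
         {x | ∃ i j : Fin m, x = Finsupp.single (i, j) (1 : A) + Finsupp.single (j, i) (1 : A)} ∪
         {x | ∃ (R : MvPolynomial (Fin m) K) (μ : Fin m) (k : ℕ),
            (∀ v ∈ R.support, ∑ i, d i * v i = k) ∧ aeval f R = 0 ∧
            x = ∑ ν, Finsupp.single (ν, μ) (aeval f (pderiv ν R))}) →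
      ∃ φ : (((Fin m × Fin m) →₀ A) ⧸ Rel) →ₗ[A] KaehlerDifferential K (FractionRing A),
        (∀ i j : Fin m,
          φ (Submodule.Quotient.mk (Finsupp.single (i, j) (1 : A))) =
            (d j : Q) • (ι (f j) • D (ι (f i))) - (d i : Q) • (ι (f i) • D (ι (f j)))) ∧
        LinearMap.range φ =
          Submodule.span A {ω : KaehlerDifferential K (FractionRing A) |
            ∃ i j : Fin m,
              ω = (d j : Q) • (ι (f j) • D (ι (f i))) - (d i : Q) • (ι (f i) • D (ι (f j)))} := by
  let inst : Module A (KaehlerDifferential K (FractionRing A)) :=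
    Module.compHom _ (algebraMap A (FractionRing A))
  -- The `SMul` is explicit because `Ω[Q⁄K]` also has a library `A`-action not syntactically
  -- equal to the `Module.compHom` one of the statement.
  have : @IsScalarTower A (FractionRing A) (KaehlerDifferential K (FractionRing A)) _ _
      inst.toSMul :=
    @IsScalarTower.of_algebraMap_smul A (FractionRing A) _ _ _ _ _ inst.toSMul fun _ _ => rfl
  intro Rel hRel
  let bracket (p : Fin m × Fin m) : KaehlerDifferential K (FractionRing A) :=
    weightedBracket d (fun i => algebraMap A (FractionRing A) (f i))
      (fun i => KaehlerDifferential.D K (FractionRing A) (algebraMap A (FractionRing A) (f i)))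
      p.1 p.2
  have hker : Rel ≤ LinearMap.ker (Finsupp.linearCombination A bracket) := by
    rw [hRel]
    exact span_bracketRelations_le_ker (KaehlerDifferential.D K (FractionRing A)) f d
  refine ⟨Rel.liftQ _ hker, fun i j => ?_, ?_⟩
  · rw [Submodule.liftQ_apply, Finsupp.linearCombination_single, one_smul]
    rfl
  · rw [Submodule.range_liftQ, Finsupp.range_linearCombination]
    congr 1
    ext ω
    simp [bracket, weightedBracket, eq_comm]

open MvPolynomial in
/-- the assignment [f_i,f_j] ↦ {f_i,f_j} gives a well-defined surjective
    A-module homomorphism from the abstractly presented module N' onto N. -/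
theorem presented_module_maps_onto_bracket_module
    {K A : Type*} [Field K] [CharZero K] [CommRing A] [IsDomain A] [Algebra K A]
    (𝒜 : ℕ → Submodule K A) [GradedAlgebra 𝒜]
    {m : ℕ} (f : Fin m → A) (d : Fin m → ℕ)
    (hd : ∀ i, 0 < d i) (hhom : ∀ i, f i ∈ 𝒜 (d i)) (hf0 : ∀ i, f i ≠ 0)
    (hgen : Algebra.adjoin K (Set.range f) = ⊤) :
    letI Q := FractionRing A
    letI ι := algebraMap A (FractionRing A)
    letI D := KaehlerDifferential.D K (FractionRing A)
    letI : Module A (KaehlerDifferential K (FractionRing A)) :=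
      Module.compHom _ (algebraMap A (FractionRing A))
    ∀ Rel : Submodule A ((Fin m × Fin m) →₀ A),
      Rel = Submodule.span A
        ({x | ∃ i j k : Fin m,
            x = Finsupp.single (i, j) ((d k : A) * f k)
              - Finsupp.single (i, k) ((d j : A) * f j)
              - Finsupp.single (k, j) ((d i : A) * f i)} ∪
         {x | ∃ i j : Fin m, x = Finsupp.single (i, j) (1 : A) + Finsupp.single (j, i) (1 : A)} ∪
         {x | ∃ (R : MvPolynomial (Fin m) K) (μ : Fin m) (k : ℕ),
            (∀ v ∈ R.support, ∑ i, d i * v i = k) ∧ aeval f R = 0 ∧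
            x = ∑ ν, Finsupp.single (ν, μ) (aeval f (pderiv ν R))}) →
      ∃ φ : (((Fin m × Fin m) →₀ A) ⧸ Rel) →ₗ[A] KaehlerDifferential K (FractionRing A),
        (∀ i j : Fin m,
          φ (Submodule.Quotient.mk (Finsupp.single (i, j) (1 : A))) =
            (d j : Q) • (ι (f j) • D (ι (f i))) - (d i : Q) • (ι (f i) • D (ι (f j)))) ∧
        LinearMap.range φ =
          Submodule.span A {ω : KaehlerDifferential K (FractionRing A) |
            ∃ i j : Fin m,
              ω = (d j : Q) • (ι (f j) • D (ι (f i))) - (d i : Q) • (ι (f i) • D (ι (f j)))} :=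
  presented_module_maps_onto_bracket_module_general f d
end

section
/- Let J_can(γ,z) for γ = (a b; c d) in U(V) be defined by J_can(γ,z) = diag(a+b(z), d − (a+b(z))^{-1}(c+d(z))⊗b). Then J_can is a factor of automorphy: J_can(γγ', z) = J_can(γ, γ'⟨z⟩)·J_can(γ', z) for all γ, γ' in U(V) and z in the ball B_Z. -/
/-- An element of `GL(V)` for `V = ℂ ⊕ Z`, `Z = Fin n → ℂ`, written in block form
`(a b; c d)` with `a ∈ ℂ`, `b ∈ Z*`, `c ∈ Z`, `d ∈ End(Z)`. -/
structure BallBlock (n : ℕ) where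
  a : ℂ
  b : (Fin n → ℂ) →ₗ[ℂ] ℂ
  c : Fin n → ℂ
  d : (Fin n → ℂ) →ₗ[ℂ] (Fin n → ℂ)

namespace BallBlock

variable {n : ℕ}

/-- The linear action of a block matrix on `V = ℂ × Z`. -/
def toFun (g : BallBlock n) : ℂ × (Fin n → ℂ) → ℂ × (Fin n → ℂ) :=
  fun v => (g.a * v.1 + g.b v.2, v.1 • g.c + g.d v.2)

/-- The hermitian form of signature `(1,n)` on `V = ℂ × Z`. -/
noncomputable def herm (v w : ℂ × (Fin n → ℂ)) : ℂ :=
  starRingEnd ℂ v.1 * w.1 - ∑ i, starRingEnd ℂ (v.2 i) * w.2 i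

/-- `g` belongs to the unitary group `U(V)` of the hermitian form. -/
def IsUnitary (g : BallBlock n) : Prop :=
  ∀ v w, herm (g.toFun v) (g.toFun w) = herm v w

/-- The fractional-linear action `g⟨z⟩ = (a + b(z))⁻¹ • (c + d(z))` on the ball. -/
noncomputable def act (g : BallBlock n) (z : Fin n → ℂ) : Fin n → ℂ :=
  (g.a + g.b z)⁻¹ • (g.c + g.d z)

/-- The canonical automorphy factor
`J_can(g,z) = (a + b(z), d − (a+b(z))⁻¹ (c + d(z)) ⊗ b) ∈ ℂ* × GL(Z)`. -/
noncomputable def Jcan (g : BallBlock n) (z : Fin n → ℂ) :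
    ℂ × ((Fin n → ℂ) →ₗ[ℂ] (Fin n → ℂ)) :=
  (g.a + g.b z, g.d - (g.a + g.b z)⁻¹ • (g.b).smulRight (g.c + g.d z))

end BallBlock

open Complex in
lemma unitary_aux {n : ℕ} (g : BallBlock (n := n)) (hg : g.IsUnitary) (z : Fin n → ℂ)
    (hz : ∑ i, Complex.normSq (z i) < 1) :
    g.a + g.b z ≠ 0 ∧ ∑ i, Complex.normSq (g.act z i) < 1 := by
  have h := hg (1, z) (1, z)
  simp only [BallBlock.toFun, BallBlock.herm, one_smul, mul_one, map_one] at h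
  set lam := g.a + g.b z with hlam
  set u := g.c + g.d z with hu
  have hre : Complex.normSq lam - ∑ i, Complex.normSq (u i)
      = 1 - ∑ i, Complex.normSq (z i) := by
    have hc : ((Complex.normSq lam - ∑ i, Complex.normSq (u i) : ℝ) : ℂ)
        = ((1 - ∑ i, Complex.normSq (z i) : ℝ) : ℂ) := by
      push_cast
      simpa [Complex.normSq_eq_conj_mul_self] using h
    exact_mod_cast hc
  have hsum : (0:ℝ) ≤ ∑ i, Complex.normSq (u i) :=
    Finset.sum_nonneg fun i _ => Complex.normSq_nonneg _
  have hlam2 : 0 < Complex.normSq lam := by linarith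
  have hlamne : lam ≠ 0 := by
    intro h0
    rw [h0, Complex.normSq_zero] at hlam2
    exact lt_irrefl _ hlam2
  refine ⟨hlamne, ?_⟩
  have hsum' : ∑ i, Complex.normSq (u i) < Complex.normSq lam := by linarith
  have hact : ∑ i, Complex.normSq (g.act z i)
      = (Complex.normSq lam)⁻¹ * ∑ i, Complex.normSq (u i) := by
    simp only [BallBlock.act, ← hlam, ← hu, Pi.smul_apply, smul_eq_mul,
      Complex.normSq_mul, Complex.normSq_inv, Finset.mul_sum]
  rw [hact]
  calc (Complex.normSq lam)⁻¹ * ∑ i, Complex.normSq (u i)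
      < (Complex.normSq lam)⁻¹ * Complex.normSq lam := by
        exact mul_lt_mul_of_pos_left hsum' (inv_pos.mpr hlam2)
    _ = 1 := inv_mul_cancel₀ (ne_of_gt hlam2)

/-- `J_can` is a factor of automorphy:
`J_can(γγ', z) = J_can(γ, γ'⟨z⟩) · J_can(γ', z)` for `γ, γ'` unitary and `z` in the ball. -/
theorem Jcan_cocycle {n : ℕ} (g g' g'' : BallBlock n)
    (hg : g.IsUnitary) (hg' : g'.IsUnitary)
    (hmul : g''.toFun = g.toFun ∘ g'.toFun)
    (z : Fin n → ℂ) (hz : ∑ i, Complex.normSq (z i) < 1) :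
    g''.Jcan z =
      ((g.Jcan (g'.act z)).1 * (g'.Jcan z).1,
        (g.Jcan (g'.act z)).2 ∘ₗ (g'.Jcan z).2) := by
  obtain ⟨hlam, hw⟩ := unitary_aux g' hg' z hz
  set w := g'.act z with hwdef
  obtain ⟨hmu, -⟩ := unitary_aux g hg w hw
  set lam := g'.a + g'.b z with hlamdef
  set mu := g.a + g.b w with hmudef
  have hcw : g'.c + g'.d z = lam • w := by
    rw [hwdef, BallBlock.act, ← hlamdef, smul_inv_smul₀ hlam]
  -- relations from hmul at (1, z)
  have h1 := congrFun hmul (1, z)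
  simp only [BallBlock.toFun, Function.comp_apply, one_smul, mul_one] at h1
  have ha : g''.a + g''.b z = mu * lam := by
    have := congrArg Prod.fst h1
    simp only at this
    rw [this, hcw, map_smul, smul_eq_mul, hmudef]
    ring
  have hc : g''.c + g''.d z = lam • (g.c + g.d w) := by
    have := congrArg Prod.snd h1
    simp only at this
    rw [this, hcw, map_smul, ← hlamdef, smul_add]
  -- relations from hmul at (0, y)
  have hb : ∀ y, g''.b y = g.a * g'.b y + g.b (g'.d y) := by
    intro y
    have := congrArg Prod.fst (congrFun hmul (0, y))
    simpa [BallBlock.toFun] using this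
  have hd : ∀ y, g''.d y = g'.b y • g.c + g.d (g'.d y) := by
    intro y
    have := congrArg Prod.snd (congrFun hmul (0, y))
    simpa [BallBlock.toFun] using this
  have hmune : g.a + g.b w ≠ 0 := hmu
  refine Prod.ext ?_ ?_
  · simp only [BallBlock.Jcan]
    rw [← hlamdef, ← hmudef, ha]
  · apply LinearMap.ext
    intro y
    simp only [BallBlock.Jcan, LinearMap.sub_apply, LinearMap.smul_apply,
      LinearMap.smulRight_apply, LinearMap.comp_apply, ← hlamdef, ← hmudef]
    rw [hcw, ha, hc, hb, hd]
    simp only [map_sub, map_smul, map_add, smul_eq_mul]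
    have hmu' : mu = g.a + g.b w := hmudef
    match_scalars <;> field_simp <;> rw [hmu'] <;> ring
end

section
/- For g in U(V), the Jacobian (derivative at z ∈ B_Z) of the fractional-linear action g⟨z⟩ = (a+b(z))^{-1}(c+d(z)) equals ρ(J_can(g,z)), where ρ(k_1,k_2) = k_1^{-1}·k_2; explicitly, J_Jac(g,z) = (a+b(z))^{-1}·(d − (a+b(z))^{-1}(c+d(z))⊗b) as an endomorphism of Z. -/
/-- for unitary `g`, the Jacobian of `z ↦ g⟨z⟩` at `z` in the ball equals
`ρ(J_can(g,z)) = (a+b(z))⁻¹ • (d − (a+b(z))⁻¹ (c+d(z)) ⊗ b)`. -/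
theorem jacobian_eq_rho_Jcan {n : ℕ} (g : BallBlock n) (hg : g.IsUnitary)
    (z : Fin n → ℂ) (hz : ∑ i, Complex.normSq (z i) < 1) :
    HasFDerivAt g.act
      (((g.a + g.b z)⁻¹ •
          (g.d - (g.a + g.b z)⁻¹ • (g.b).smulRight (g.c + g.d z))).toContinuousLinearMap)
      z := by
    classical
  -- nonvanishing of a + b z
  have h0 := hg (1, z) (1, z)
  simp only [BallBlock.toFun, BallBlock.herm, mul_one, one_smul] at h0
  have h1 : ((Complex.normSq (g.a * 1 + g.b z) : ℂ))
      - ∑ i, (Complex.normSq ((g.c + g.d z) i) : ℂ)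
      = (1 : ℂ) - ∑ i, (Complex.normSq (z i) : ℂ) := by
    simp only [Complex.normSq_eq_conj_mul_self]
    simpa using h0
  have h2 : Complex.normSq (g.a * 1 + g.b z)
      - ∑ i, Complex.normSq ((g.c + g.d z) i)
      = 1 - ∑ i, Complex.normSq (z i) := by exact_mod_cast h1
  have hw : g.a + g.b z ≠ 0 := by
    intro hzero
    rw [show g.a * 1 + g.b z = g.a + g.b z by ring, hzero, map_zero] at h2
    have hnn : (0 : ℝ) ≤ ∑ i, Complex.normSq ((g.c + g.d z) i) :=
      Finset.sum_nonneg fun i _ => Complex.normSq_nonneg _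
    linarith
  -- derivatives
  set w : ℂ := g.a + g.b z with hwdef
  have hb : HasFDerivAt (fun y : Fin n → ℂ => g.a + g.b y)
      (g.b.toContinuousLinearMap) z :=
    (g.b.toContinuousLinearMap.hasFDerivAt).const_add g.a
  have hinv : HasFDerivAt (fun y : Fin n → ℂ => (g.a + g.b y)⁻¹)
      (-((w : ℂ) ^ 2)⁻¹ • g.b.toContinuousLinearMap) z := by
    have h' := (hasFDerivAt_inv hw).comp z hb
    refine h'.congr_fderiv ?_
    ext h
    simp [mul_comm]
  have hd : HasFDerivAt (fun y : Fin n → ℂ => g.c + g.d y)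
      (g.d.toContinuousLinearMap) z :=
    (g.d.toContinuousLinearMap.hasFDerivAt).const_add g.c
  have hsmul := hinv.smul hd
  have heq : (w⁻¹ • g.d.toContinuousLinearMap +
        (-((w : ℂ) ^ 2)⁻¹ • g.b.toContinuousLinearMap).smulRight (g.c + g.d z))
      = ((w⁻¹ • (g.d - w⁻¹ • (g.b).smulRight (g.c + g.d z))).toContinuousLinearMap) := by
    apply ContinuousLinearMap.ext
    intro h
    funext i
    simp only [ContinuousLinearMap.add_apply, ContinuousLinearMap.smul_apply,
      ContinuousLinearMap.smulRight_apply, ContinuousLinearMap.neg_apply,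
      LinearMap.coe_toContinuousLinearMap', LinearMap.smul_apply, LinearMap.sub_apply,
      LinearMap.smulRight_apply, Pi.add_apply, Pi.smul_apply, Pi.sub_apply,
      smul_eq_mul, neg_mul]
    field_simp
    ring
  have : HasFDerivAt (fun y : Fin n → ℂ => (g.a + g.b y)⁻¹ • (g.c + g.d y))
      (((g.a + g.b z)⁻¹ •
        (g.d - (g.a + g.b z)⁻¹ • (g.b).smulRight (g.c + g.d z))).toContinuousLinearMap) z := by
    rw [← hwdef, ← heq]
    exact hsmul
  exact this
end

section
/- The polynomial S = T_1^3 + ⋯ + T_5^3 − (T_1+⋯+T_5)^3 is irreducible in ℂ[T_1,…,T_5]. -/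
/-!
Regard `S` as a polynomial in `X 0` over `ℂ[X 1, …, X 4]`. With `σ = X 1 + ⋯ + X 4` it reads
`-3σ · X 0 ^ 2 - 3σ² · X 0 + (X 1 ^ 3 + ⋯ + X 4 ^ 3 - σ³)`. The linear form `σ` is prime, divides
every coefficient except the constant one, and `σ²` does not divide the leading one, so Eisenstein's
criterion applies to the reversed polynomial. The constant term is not divisible by `σ` because
`X 1 ^ 3 + ⋯ + X 4 ^ 3` does not vanish at the point `(1, 1, -2, 0)` of `σ = 0`.
-/

namespace Polynomial

variable {R : Type*} [CommRing R]

theorem IsPrimitive.reverse {f : R[X]} (hf : f.IsPrimitive) : f.reverse.IsPrimitive := by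
  rw [isPrimitive_iff_isUnit_of_C_dvd] at hf ⊢
  refine fun r hr => hf r (C_dvd_iff_dvd_coeff _ _ |>.mpr fun n => ?_)
  rcases le_or_gt n f.natDegree with hn | hn
  · simpa [coeff_reverse, revAt_le (Nat.sub_le _ n), Nat.sub_sub_self hn] using
      (C_dvd_iff_dvd_coeff _ _).mp hr (f.natDegree - n)
  · simp [coeff_eq_zero_of_natDegree_lt hn]

variable [IsDomain R]

theorem isUnit_of_isUnit_reverse {f : R[X]} (hf0 : f.coeff 0 ≠ 0) (hf : IsUnit f.reverse) :
    IsUnit f := by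
  have hdeg : f.natDegree = 0 := by
    simpa [reverse_natDegree, natTrailingDegree_eq_zero.mpr (Or.inr hf0)] using
      natDegree_eq_zero_of_isUnit hf
  rwa [eq_C_of_natDegree_eq_zero hdeg, ← reverse_C, ← eq_C_of_natDegree_eq_zero hdeg]

theorem irreducible_of_irreducible_reverse {f : R[X]} (hf0 : f.coeff 0 ≠ 0)
    (hf : Irreducible f.reverse) : Irreducible f := by
  refine ⟨fun hu => hf.not_isUnit ?_, fun g h hgh => ?_⟩
  · obtain ⟨r, -, rfl⟩ := Polynomial.isUnit_iff.mp hu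
    simpa using hu
  · rw [hgh, mul_coeff_zero, mul_ne_zero_iff] at hf0
    rw [hgh, reverse_mul_of_domain] at hf
    exact (hf.isUnit_or_isUnit rfl).imp (isUnit_of_isUnit_reverse hf0.1)
      (isUnit_of_isUnit_reverse hf0.2)

theorem irreducible_of_eisenstein_criterion_reverse {f : R[X]} {P : Ideal R} (hP : P.IsPrime)
    (hf0 : f.coeff 0 ∉ P) (hfP : ∀ n, 0 < n → f.coeff n ∈ P) (hfd0 : 0 < f.natDegree)
    (hfl : f.leadingCoeff ∉ P ^ 2) (hu : f.IsPrimitive) : Irreducible f := by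
  have hf0' : f.coeff 0 ≠ 0 := fun h => hf0 (h ▸ P.zero_mem)
  have hdeg : f.reverse.natDegree = f.natDegree := by
    simp [reverse_natDegree, natTrailingDegree_eq_zero.mpr (Or.inr hf0')]
  refine irreducible_of_irreducible_reverse hf0' <|
    irreducible_of_eisenstein_criterion hP ?_ (fun n hn => ?_) ?_ ?_ hu.reverse
  · rwa [reverse_leadingCoeff, trailingCoeff_eq_coeff_zero hf0']
  · have hn : n < f.natDegree := by
      rw [← hdeg]; exact_mod_cast degree_le_natDegree.trans_lt' hn
    rw [coeff_reverse, revAt_le hn.le]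
    exact hfP _ (Nat.sub_pos_of_lt hn)
  · rw [degree_eq_natDegree (reverse_eq_zero.not.mpr ?_), hdeg]
    · exact_mod_cast hfd0
    · rintro rfl; simp at hfd0
  · rwa [coeff_zero_reverse]

theorem irreducible_quadratic_of_prime {u s b c : R} (hu : IsUnit u) (hs : Prime s)
    (hb : s ∣ b) (hc : ¬ s ∣ c) : Irreducible (C (u * s) * X ^ 2 + C b * X + C c) := by
  set a := u * s with ha
  have ha0 : a ≠ 0 := mul_ne_zero hu.ne_zero hs.ne_zero
  have hsa : s ∣ a := dvd_mul_left s u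
  have hP : (Ideal.span {s}).IsPrime := (Ideal.span_singleton_prime hs.ne_zero).mpr hs
  refine irreducible_of_eisenstein_criterion_reverse hP ?_ (fun n hn => ?_) ?_ ?_ ?_
  · simpa [Ideal.mem_span_singleton] using hc
  · rw [Ideal.mem_span_singleton]
    rcases n with _ | _ | _ | n <;> simp [coeff_C, hb, hsa] at hn ⊢
  · simp [natDegree_quadratic ha0]
  · rw [leadingCoeff_quadratic ha0, Ideal.span_singleton_pow, Ideal.mem_span_singleton, pow_two,
      ha, mul_comm u, mul_dvd_mul_iff_left hs.ne_zero]
    exact fun h => hs.not_isUnit (isUnit_of_dvd_unit h hu)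
  · refine isPrimitive_iff_isUnit_of_C_dvd.mpr fun r hr => ?_
    have hra : r ∣ a := by simpa using (C_dvd_iff_dvd_coeff _ _).mp hr 2
    have hrc : r ∣ c := by simpa using (C_dvd_iff_dvd_coeff _ _).mp hr 0
    obtain ⟨t, hst⟩ := hu.dvd_mul_left.mp hra
    exact (hs.irreducible.isUnit_or_isUnit hst).resolve_right fun ht =>
      hc ((ht.dvd_mul_right.mp (dvd_of_eq hst)).trans hrc)

end Polynomial

namespace MvPolynomial

theorem prime_sum_X {R : Type*} [CommRing R] [IsDomain R] (n : ℕ) :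
    Prime (∑ i : Fin (n + 1), X i : MvPolynomial (Fin (n + 1)) R) := by
  rw [← MulEquiv.prime_iff (finSuccEquiv R n).toMulEquiv]
  have : (finSuccEquiv R n).toMulEquiv (∑ i : Fin (n + 1), X i) =
      Polynomial.X - Polynomial.C (-∑ i : Fin n, X i) := by
    simp [Fin.sum_univ_succ, finSuccEquiv_X_zero, finSuccEquiv_X_succ]
  rw [this]
  exact Polynomial.prime_X_sub_C _

theorem finSuccEquiv_sum_X_pow_three_sub_pow_three {R : Type*} [CommRing R] (n : ℕ) :
    finSuccEquiv R n (∑ i, X i ^ 3 - (∑ i, X i) ^ 3) =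
      Polynomial.C (-3 * ∑ i, X i) * Polynomial.X ^ 2 +
        Polynomial.C (-3 * (∑ i, X i) ^ 2) * Polynomial.X +
        Polynomial.C (∑ i, X i ^ 3 - (∑ i, X i) ^ 3) := by
  simp only [Fin.sum_univ_succ, map_sub, map_add, map_pow, map_sum, map_mul, map_neg, map_ofNat,
    finSuccEquiv_X_zero, finSuccEquiv_X_succ]
  ring

theorem not_sum_X_dvd_sum_X_pow_three :
    ¬ (∑ i : Fin 4, X i : MvPolynomial (Fin 4) ℂ) ∣ ∑ i : Fin 4, X i ^ 3 := by
  rintro ⟨q, hq⟩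
  have := congrArg (eval (![1, 1, -2, 0] : Fin 4 → ℂ)) hq
  simp [Fin.sum_univ_four] at this
  norm_num at this

end MvPolynomial

open MvPolynomial in
/-- the Segre cubic polynomial `S = T₁³+⋯+T₅³ − (T₁+⋯+T₅)³` is
irreducible in `ℂ[T₁,…,T₅]`. -/
theorem segre_cubic_irreducible :
    Irreducible ((∑ i : Fin 5, X i ^ 3) - (∑ i : Fin 5, X i) ^ 3 :
      MvPolynomial (Fin 5) ℂ) := by
  rw [← MulEquiv.irreducible_iff (finSuccEquiv ℂ 4).toMulEquiv]
  change Irreducible (finSuccEquiv ℂ 4 _)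
  rw [finSuccEquiv_sum_X_pow_three_sub_pow_three]
  have hunit : IsUnit (-3 : MvPolynomial (Fin 4) ℂ) := by
    simpa only [map_neg, map_ofNat] using
      (IsUnit.mk0 (-3 : ℂ) (by norm_num)).map (C : ℂ →+* MvPolynomial (Fin 4) ℂ)
  have hσ : Prime (∑ i : Fin 4, X i : MvPolynomial (Fin 4) ℂ) := prime_sum_X 3
  have hc : ¬ (∑ i : Fin 4, X i) ∣ (∑ i : Fin 4, X i ^ 3 - (∑ i, X i) ^ 3 :
      MvPolynomial (Fin 4) ℂ) := by
    rw [dvd_sub_left (dvd_pow_self _ three_ne_zero)]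
    exact not_sum_X_dvd_sum_X_pow_three
  exact Polynomial.irreducible_quadratic_of_prime hunit hσ ⟨-3 * ∑ i, X i, by ring⟩ hc
end
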